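/- Let n ≥ 3 and m ≥ 2 be integers. Then the strong metric dimension of the jellyfish graph JFG(n, m) equals nm − 1; in particular, the set of all pendant vertices except the single pendant vertex v_{nm} is a strong resolving set of JFG(n, m). -/

import Mathlib

open SimpleGraph

/-- Vertex type of the jellyfish graph `JFG(n, m)`: cycle vertices (left) and
pendant vertices (right, a cycle vertex together with a pendant index). -/
abbrev JVert (n m : ℕ) := (ZMod n) ⊕ ((ZMod n) × Fin m)

/-- The jellyfish graph `JFG(n, m)`: the cycle `C_n` together with `m` pendant
vertices attached to each cycle vertex. -/
def jellyfish (n m : ℕ) : SimpleGraph (JVert n m) where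
  Adj u v :=
    match u, v with
    | Sum.inl i, Sum.inl j => i ≠ j ∧ (i - j = 1 ∨ j - i = 1)
    | Sum.inl i, Sum.inr p => p.1 = i
    | Sum.inr p, Sum.inl i => p.1 = i
    | Sum.inr _, Sum.inr _ => False
  symm := by
    constructor
    rintro (i | p) (j | q) h
    · exact ⟨h.1.symm, h.2.symm⟩
    · exact h
    · exact h
    · exact h
  loopless := by
    constructor
    rintro (i | p) h
    · exact h.1 rfl
    · exact h


/-- `w` strongly resolves `u` and `v`: `u` lies on a shortest `v`–`w` path or
`v` lies on a shortest `u`–`w` path. -/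
def StronglyResolves {V : Type*} (G : SimpleGraph V) (w u v : V) : Prop :=
  G.dist v w = G.dist v u + G.dist u w ∨ G.dist u w = G.dist u v + G.dist v w

/-- `N` is a strong resolving set of `G`. -/
def IsStrongResolving {V : Type*} (G : SimpleGraph V) (N : Set V) : Prop :=
  ∀ u v : V, u ≠ v → ∃ w ∈ N, StronglyResolves G w u v

/-- The strong metric dimension of `G`: the minimum cardinality of a strong
resolving set. -/
noncomputable def strongMetricDim {V : Type*} (G : SimpleGraph V) : ℕ :=
  sInf {k | ∃ N : Set V, IsStrongResolving G N ∧ N.ncard = k}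

/-! A pendant vertex is never an interior vertex of a geodesic, so two pendant vertices are
strongly resolved only by one of themselves: a strong resolving set of `JFG(n, m)` misses at
most one of its `nm` pendant vertices. Conversely, a pendant vertex at cycle vertex `i` strongly
resolves `i` from every other vertex, since `i` lies on every geodesic into it; hence leaving
out a single pendant vertex still gives a strong resolving set. -/

namespace SimpleGraph

variable {V : Type*} {G : SimpleGraph V} {u v w c x : V}

lemma adj_of_neighborSet_eq_singleton (hv : G.neighborSet v = {c}) : G.Adj v c :=
  (G.mem_neighborSet v c).1 (hv ▸ rfl)

lemma Connected.dist_pendant (hG : G.Connected) (hv : G.neighborSet v = {c}) (hx : x ≠ v) :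
    G.dist x v = G.dist x c + 1 := by
  apply le_antisymm
  · calc G.dist x v ≤ G.dist x c + G.dist c v := hG.dist_triangle
      _ = G.dist x c + 1 := by
        rw [dist_eq_one_iff_adj.2 (adj_of_neighborSet_eq_singleton hv).symm]
  · obtain ⟨p, hp⟩ := hG.exists_walk_length_eq_dist v x
    rw [dist_comm (u := x) (v := c), dist_comm (u := x) (v := v), ← hp]
    cases p with
    | nil => exact absurd rfl hx
    | @cons _ b _ hb q =>
      obtain rfl : b = c := by rw [← Set.mem_singleton_iff, ← hv]; exact hb
      simpa using dist_le q

lemma Connected.dist_lt_dist_add_dist_of_pendant (hG : G.Connected)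
    (hu : G.neighborSet u = {c}) (hv : v ≠ u) (hw : w ≠ u) :
    G.dist v w < G.dist v u + G.dist u w := by
  calc G.dist v w ≤ G.dist v c + G.dist c w := hG.dist_triangle
    _ < (G.dist v c + 1) + (G.dist w c + 1) := by rw [dist_comm (u := c)]; omega
    _ = G.dist v u + G.dist u w := by
      rw [dist_comm (u := u), hG.dist_pendant hu hv, hG.dist_pendant hu hw]

end SimpleGraph

variable {V : Type*} {G : SimpleGraph V} {N L : Set V} {u v w c x : V}

lemma StronglyResolves.symm (h : StronglyResolves G w u v) : StronglyResolves G w v u :=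
  Or.symm h

lemma stronglyResolves_self_left : StronglyResolves G u u v :=
  .inl (by simp)

lemma stronglyResolves_self_right : StronglyResolves G v u v :=
  stronglyResolves_self_left.symm

lemma stronglyResolves_of_pendant (hG : G.Connected) (hv : G.neighborSet v = {c}) :
    StronglyResolves G v c x := by
  by_cases hxv : x = v
  · exact hxv ▸ stronglyResolves_self_right
  · left
    rw [hG.dist_pendant hv hxv,
      dist_eq_one_iff_adj.2 (SimpleGraph.adj_of_neighborSet_eq_singleton hv).symm]

lemma StronglyResolves.eq_or_eq_of_pendant (hG : G.Connected) {c' : V}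
    (hu : G.neighborSet u = {c}) (hv : G.neighborSet v = {c'}) (huv : u ≠ v)
    (h : StronglyResolves G w u v) : w = u ∨ w = v := by
  by_contra! hw
  rcases h with h | h
  · exact (hG.dist_lt_dist_add_dist_of_pendant hu huv.symm hw.1).ne h
  · exact (hG.dist_lt_dist_add_dist_of_pendant hv huv hw.2).ne h

lemma IsStrongResolving.ncard_le_ncard_add_one_of_pendant [Finite V]
    (hG : G.Connected) (hN : IsStrongResolving G N)
    (hL : ∀ u ∈ L, ∃ c, G.neighborSet u = {c}) : L.ncard ≤ N.ncard + 1 := by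
  have hLN : (L \ N).ncard ≤ 1 := by
    refine (Set.ncard_le_one).2 fun u hu v hv => by_contra fun huv => ?_
    obtain ⟨c, hc⟩ := hL u hu.1
    obtain ⟨c', hc'⟩ := hL v hv.1
    obtain ⟨w, hwN, hw⟩ := hN u v huv
    rcases hw.eq_or_eq_of_pendant hG hc hc' huv with rfl | rfl
    exacts [hu.2 hwN, hv.2 hwN]
  have := Set.ncard_le_ncard_sdiff_add_ncard L N
  omega

lemma isStrongResolving_of_pendant (hG : G.Connected) (z : V)
    (h : ∀ x ∉ N, x ≠ z → ∃ ℓ ∈ N, G.neighborSet ℓ = {x}) : IsStrongResolving G N := by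
  intro u v huv
  by_cases hu : u ∈ N
  · exact ⟨u, hu, stronglyResolves_self_left⟩
  by_cases hv : v ∈ N
  · exact ⟨v, hv, stronglyResolves_self_right⟩
  by_cases huz : u = z
  · obtain ⟨ℓ, hℓN, hℓ⟩ := h v hv (huz ▸ huv.symm)
    exact ⟨ℓ, hℓN, (stronglyResolves_of_pendant hG hℓ).symm⟩
  · obtain ⟨ℓ, hℓN, hℓ⟩ := h u hu huz
    exact ⟨ℓ, hℓN, stronglyResolves_of_pendant hG hℓ⟩

lemma strongMetricDim_eq_ncard (hN : IsStrongResolving G N)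
    (hmin : ∀ N', IsStrongResolving G N' → N.ncard ≤ N'.ncard) :
    strongMetricDim G = N.ncard :=
  le_antisymm (Nat.sInf_le ⟨N, hN, rfl⟩)
    (le_csInf ⟨_, N, hN, rfl⟩ fun _ ⟨N', hN', hk⟩ => hk ▸ hmin N' hN')

lemma jellyfish_reachable_succ {n m : ℕ} (i : ZMod n) :
    (jellyfish n m).Reachable (Sum.inl i) (Sum.inl (i + 1)) := by
  by_cases h : i = i + 1
  · rw [← h]
  · exact Adj.reachable ⟨h, .inr (add_sub_cancel_left i 1)⟩

lemma jellyfish_connected (n m : ℕ) : (jellyfish n m).Connected := by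
  have hcycle (k : ℤ) : (jellyfish n m).Reachable (Sum.inl 0) (Sum.inl (k : ZMod n)) := by
    induction k using Int.induction_on with
    | zero => rw [Int.cast_zero]
    | succ k ih => exact ih.trans (by push_cast; exact jellyfish_reachable_succ _)
    | pred k ih =>
      refine ih.trans (Reachable.symm ?_)
      simpa using jellyfish_reachable_succ (m := m) ((-k - 1 : ℤ) : ZMod n)
  have hroot : ∀ x : JVert n m, (jellyfish n m).Reachable (Sum.inl 0) x := by
    rintro (i | ⟨i, s⟩)
    · obtain ⟨k, rfl⟩ := ZMod.intCast_surjective i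
      exact hcycle k
    · obtain ⟨k, rfl⟩ := ZMod.intCast_surjective i
      exact (hcycle k).trans (Adj.reachable rfl)
  have : Nonempty (JVert n m) := ⟨Sum.inl 0⟩
  exact ⟨fun x y => (hroot x).symm.trans (hroot y)⟩

lemma jellyfish_neighborSet_inr {n m : ℕ} (p : ZMod n × Fin m) :
    (jellyfish n m).neighborSet (Sum.inr p) = {Sum.inl p.1} := by
  ext (i | q)
  · simp [jellyfish, eq_comm]
  · simp [jellyfish]

theorem jellyfish_strongMetricDim (n m : ℕ) (hn : 3 ≤ n) (hm : 2 ≤ m) :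
    strongMetricDim (jellyfish n m) = n * m - 1 ∧
    IsStrongResolving (jellyfish n m)
      (Set.range (Sum.inr : ZMod n × Fin m → JVert n m) \
        {Sum.inr ((n : ZMod n), (⟨m - 1, by omega⟩ : Fin m))}) := by
  have : NeZero n := ⟨by omega⟩
  set z : JVert n m := Sum.inr ((n : ZMod n), ⟨m - 1, by omega⟩)
  set P := Set.range (Sum.inr : ZMod n × Fin m → JVert n m)
  have hG := jellyfish_connected n m
  have hP : P.ncard = n * m := by
    simp [P, Set.ncard_range_of_injective Sum.inr_injective]
  have hres : IsStrongResolving (jellyfish n m) (P \ {z}) := by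
    refine isStrongResolving_of_pendant hG z ?_
    rintro (i | p) hx hxz
    · refine ⟨Sum.inr (i, ⟨0, by omega⟩), ⟨Set.mem_range_self _, ?_⟩,
        jellyfish_neighborSet_inr _⟩
      simp only [z, Set.mem_singleton_iff, Sum.inr.injEq, Prod.mk.injEq, Fin.ext_iff,
        not_and]
      omega
    · exact (hx ⟨Set.mem_range_self p, hxz⟩).elim
  have hcard : (P \ {z}).ncard = n * m - 1 := by
    rw [Set.ncard_sdiff_singleton_of_mem (Set.mem_range_self _), hP]
  refine ⟨hcard ▸ strongMetricDim_eq_ncard hres fun N hN => ?_, hres⟩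
  have := hN.ncard_le_ncard_add_one_of_pendant hG (L := P)
    (by rintro _ ⟨p, rfl⟩; exact ⟨_, jellyfish_neighborSet_inr p⟩)
  omega
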